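/- arXiv:1810.09212 — 2 statements merged into one kernel-verified Lean document; each statement's English description precedes it below -/
import Mathlib

section
/- Let ε > 0, T > 0 and γ ∈ ℝ. Suppose u : ℝ × ℝ² → ℝ is infinitely differentiable, set w = −ε²Δu + f(u), and assume that ∂ₜu = Δw on [0,T] × closure(Ω) and that ∂ₙu(t,·) = 0 and ∂ₙw(t,·) = 0 at every point of the four open edges of ∂Ω for every t ∈ [0,T]. Then for every t ∈ [0,T] and every infinitely differentiable v : ℝ² → ℝ, the Nitsche variational identity holds: ∫_Ω ∂ₜu(t,·) v dx + ε² a₁(u(t,·), v) + ∫_Ω ∇f(u(t,·)) · ∇v dx = 0. -/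
open MeasureTheory Set

noncomputable def pdx (φ : ℝ × ℝ → ℝ) (p : ℝ × ℝ) : ℝ := fderiv ℝ φ p (1, 0)

noncomputable def pdy (φ : ℝ × ℝ → ℝ) (p : ℝ × ℝ) : ℝ := fderiv ℝ φ p (0, 1)

noncomputable def lap (φ : ℝ × ℝ → ℝ) (p : ℝ × ℝ) : ℝ := pdx (pdx φ) p + pdy (pdy φ) p

/-- The open unit square `Ω = (0,1) × (0,1)`. -/
def unitSq : Set (ℝ × ℝ) := Ioo (0:ℝ) 1 ×ˢ Ioo (0:ℝ) 1

noncomputable def F (s : ℝ) : ℝ := (1/4) * (s^2 - 1)^2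

noncomputable def fDW (s : ℝ) : ℝ := s^3 - s

noncomputable def dtu (u : ℝ → ℝ × ℝ → ℝ) (t : ℝ) (p : ℝ × ℝ) : ℝ :=
  deriv (fun s => u s p) t

def ZeroNormalDeriv (φ : ℝ × ℝ → ℝ) : Prop :=
  (∀ y ∈ Ioo (0:ℝ) 1, -pdx φ (0, y) = 0 ∧ pdx φ (1, y) = 0) ∧
  (∀ x ∈ Ioo (0:ℝ) 1, -pdy φ (x, 0) = 0 ∧ pdy φ (x, 1) = 0)

/-- The boundary integral `∫_{∂Ω} g ds`: the sum of the four one-dimensional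
arclength integrals over the edges of the unit square. -/
noncomputable def bInt (g : ℝ × ℝ → ℝ) : ℝ :=
  (∫ y in Ioo (0:ℝ) 1, g (0, y)) + (∫ y in Ioo (0:ℝ) 1, g (1, y)) +
  (∫ x in Ioo (0:ℝ) 1, g (x, 0)) + (∫ x in Ioo (0:ℝ) 1, g (x, 1))

/-- The outward normal derivative `∂ₙφ` on `∂Ω` (on `{0}×(0,1)` it is `-∂φ/∂x`,
on `{1}×(0,1)` it is `∂φ/∂x`, on `(0,1)×{0}` it is `-∂φ/∂y`, on `(0,1)×{1}` it
is `∂φ/∂y`). -/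
noncomputable def nder (φ : ℝ × ℝ → ℝ) (p : ℝ × ℝ) : ℝ :=
  if p.1 = 0 then -pdx φ p
  else if p.1 = 1 then pdx φ p
  else if p.2 = 0 then -pdy φ p
  else pdy φ p

/-- The Nitsche bilinear form
`a₁(w,v) = ∫_Ω Δw Δv − ∫_{∂Ω} Δw ∂ₙv − ∫_{∂Ω} ∂ₙw Δv + γ ∫_{∂Ω} ∂ₙw ∂ₙv`. -/
noncomputable def a1 (γ : ℝ) (w v : ℝ × ℝ → ℝ) : ℝ :=
  (∫ p in unitSq, lap w p * lap v p)
    - bInt (fun p => lap w p * nder v p)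
    - bInt (fun p => nder w p * lap v p)
    + γ * bInt (fun p => nder w p * nder v p)

/-!
Everything follows from Green's first identity `∫_Ω (Δφ ψ + ∇φ·∇ψ) = ∫_{∂Ω} ∂ₙφ ψ` on the square,
i.e. the divergence theorem for the field `ψ ∇φ`. As `∂ₙw = 0`,
`∫ ∂ₜu v = ∫ Δw v = -∫ ∇w·∇v = ε² ∫ ∇Δu·∇v - ∫ ∇f(u)·∇v`. As `∂ₙu = 0`, the boundary terms of
`a₁(u,v)` carrying `∂ₙu` vanish, and Green's identity for `(v, Δu)` turns the rest into
`a₁(u,v) = -∫ ∇Δu·∇v`. The three terms of the identity then cancel.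
-/

open scoped ContDiff

noncomputable def gradDot (φ ψ : ℝ × ℝ → ℝ) (p : ℝ × ℝ) : ℝ :=
  pdx φ p * pdx ψ p + pdy φ p * pdy ψ p

theorem gradDot_comm (φ ψ : ℝ × ℝ → ℝ) : gradDot φ ψ = gradDot ψ φ := by
  funext p
  simp only [gradDot]
  ring

section Smoothness

variable {n m : WithTop ℕ∞} {φ ψ : ℝ × ℝ → ℝ}

theorem ContDiff.pdx (hφ : ContDiff ℝ n φ) (hmn : m + 1 ≤ n) : ContDiff ℝ m (pdx φ) :=
  (hφ.fderiv_right hmn).clm_apply contDiff_const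

theorem ContDiff.pdy (hφ : ContDiff ℝ n φ) (hmn : m + 1 ≤ n) : ContDiff ℝ m (pdy φ) :=
  (hφ.fderiv_right hmn).clm_apply contDiff_const

theorem ContDiff.lap (hφ : ContDiff ℝ n φ) (hmn : m + 2 ≤ n) : ContDiff ℝ m (lap φ) := by
  rw [← one_add_one_eq_two, ← add_assoc] at hmn
  exact ((hφ.pdx hmn).pdx le_rfl).add ((hφ.pdy hmn).pdy le_rfl)

theorem ContDiff.continuous_gradDot (hφ : ContDiff ℝ 1 φ) (hψ : ContDiff ℝ 1 ψ) :
    Continuous (gradDot φ ψ) :=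
  (((hφ.pdx (m := 0) le_rfl).continuous.mul (hψ.pdx (m := 0) le_rfl).continuous).add
    ((hφ.pdy (m := 0) le_rfl).continuous.mul (hψ.pdy (m := 0) le_rfl).continuous))

end Smoothness

theorem integrableOn_unitSq {g : ℝ × ℝ → ℝ} (hg : Continuous g) : IntegrableOn g unitSq :=
  (hg.continuousOn.integrableOn_compact isCompact_Icc).mono_set <| by
    rw [unitSq, ← Icc_prod_Icc]
    exact prod_mono Ioo_subset_Icc_self Ioo_subset_Icc_self

theorem unitSq_ae_eq_Icc : unitSq =ᵐ[volume] Icc ((0 : ℝ), (0 : ℝ)) (1, 1) := by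
  rw [unitSq, ← Icc_prod_Icc]
  exact Measure.set_prod_ae_eq Ioo_ae_eq_Icc Ioo_ae_eq_Icc

theorem integral_gradDot_const_mul_add {φ₁ φ₂ ψ : ℝ × ℝ → ℝ} (c : ℝ) (h₁ : ContDiff ℝ 1 φ₁)
    (h₂ : ContDiff ℝ 1 φ₂) (hψ : ContDiff ℝ 1 ψ) :
    ∫ p in unitSq, gradDot (fun q => c * φ₁ q + φ₂ q) ψ p =
      c * (∫ p in unitSq, gradDot φ₁ ψ p) + ∫ p in unitSq, gradDot φ₂ ψ p := by
  have hfderiv : ∀ p, fderiv ℝ (fun q => c * φ₁ q + φ₂ q) p =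
      c • fderiv ℝ φ₁ p + fderiv ℝ φ₂ p := fun p => by
    have hd₁ := h₁.differentiable one_ne_zero p
    rw [fderiv_fun_add (hd₁.const_mul c) (h₂.differentiable one_ne_zero p),
      fderiv_const_mul hd₁]
  have hpointwise : ∀ p, gradDot (fun q => c * φ₁ q + φ₂ q) ψ p =
      c * gradDot φ₁ ψ p + gradDot φ₂ ψ p := fun p => by
    simp only [gradDot, pdx, pdy, hfderiv, add_apply, smul_apply, smul_eq_mul]
    ring
  simp only [hpointwise]
  rw [integral_add ((integrableOn_unitSq (h₁.continuous_gradDot hψ)).const_mul c)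
    (integrableOn_unitSq (h₂.continuous_gradDot hψ)), integral_const_mul]

theorem bInt_nder_mul (φ g : ℝ × ℝ → ℝ) :
    bInt (fun p => nder φ p * g p) =
      -(∫ y in Ioo (0:ℝ) 1, pdx φ (0, y) * g (0, y))
        + (∫ y in Ioo (0:ℝ) 1, pdx φ (1, y) * g (1, y))
        - (∫ x in Ioo (0:ℝ) 1, pdy φ (x, 0) * g (x, 0))
        + (∫ x in Ioo (0:ℝ) 1, pdy φ (x, 1) * g (x, 1)) := by
  have left : ∫ y in Ioo (0:ℝ) 1, nder φ (0, y) * g (0, y) =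
      -∫ y in Ioo (0:ℝ) 1, pdx φ (0, y) * g (0, y) := by
    rw [← integral_neg]
    simp [nder]
  have right : ∫ y in Ioo (0:ℝ) 1, nder φ (1, y) * g (1, y) =
      ∫ y in Ioo (0:ℝ) 1, pdx φ (1, y) * g (1, y) := by
    simp [nder]
  have bottom : ∫ x in Ioo (0:ℝ) 1, nder φ (x, 0) * g (x, 0) =
      -∫ x in Ioo (0:ℝ) 1, pdy φ (x, 0) * g (x, 0) := by
    rw [← integral_neg]
    refine setIntegral_congr_fun measurableSet_Ioo fun x hx => ?_
    simp [nder, hx.1.ne', hx.2.ne]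
  have top : ∫ x in Ioo (0:ℝ) 1, nder φ (x, 1) * g (x, 1) =
      ∫ x in Ioo (0:ℝ) 1, pdy φ (x, 1) * g (x, 1) := by
    refine setIntegral_congr_fun measurableSet_Ioo fun x hx => ?_
    simp [nder, hx.1.ne', hx.2.ne]
  rw [bInt, left, right, bottom, top]
  ring

theorem bInt_nder_mul_eq_zero {φ : ℝ × ℝ → ℝ} (hφ : ZeroNormalDeriv φ) (g : ℝ × ℝ → ℝ) :
    bInt (fun p => nder φ p * g p) = 0 := by
  have edge : ∀ h k : ℝ → ℝ, (∀ s ∈ Ioo (0:ℝ) 1, h s = 0) →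
      ∫ s in Ioo (0:ℝ) 1, h s * k s = 0 := fun h k hh =>
    (setIntegral_congr_fun measurableSet_Ioo fun s hs => by rw [hh s hs, zero_mul]).trans
      (by simp)
  rw [bInt_nder_mul, edge _ _ fun y hy => neg_eq_zero.mp (hφ.1 y hy).1,
    edge _ _ fun y hy => (hφ.1 y hy).2, edge _ _ fun x hx => neg_eq_zero.mp (hφ.2 x hx).1,
    edge _ _ fun x hx => (hφ.2 x hx).2]
  simp

theorem integral_lap_mul_add_integral_gradDot {φ ψ : ℝ × ℝ → ℝ} (hφ : ContDiff ℝ 2 φ)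
    (hψ : ContDiff ℝ 1 ψ) :
    (∫ p in unitSq, lap φ p * ψ p) + (∫ p in unitSq, gradDot φ ψ p) =
      bInt (fun p => nder φ p * ψ p) := by
  have hφx : ContDiff ℝ 1 (pdx φ) := hφ.pdx (by norm_num)
  have hφy : ContDiff ℝ 1 (pdy φ) := hφ.pdy (by norm_num)
  have hcont : Continuous fun p => lap φ p * ψ p + gradDot φ ψ p :=
    ((hφ.lap (m := 0) le_rfl).continuous.mul hψ.continuous).add
      ((hφ.of_le (by norm_num)).continuous_gradDot hψ)
  have hdiv := integral_divergence_prod_Icc_of_hasFDerivAt_off_countable_of_le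
    (fun p => pdx φ p * ψ p) (fun p => pdy φ p * ψ p)
    (fun p => pdx φ p • fderiv ℝ ψ p + ψ p • fderiv ℝ (pdx φ) p)
    (fun p => pdy φ p • fderiv ℝ ψ p + ψ p • fderiv ℝ (pdy φ) p)
    (0, 0) (1, 1) (by norm_num [Prod.le_def]) ∅ countable_empty
    (hφx.continuous.mul hψ.continuous).continuousOn
    (hφy.continuous.mul hψ.continuous).continuousOn
    (fun p _ => ((hφx.differentiable one_ne_zero p).hasFDerivAt).mul
      (hψ.differentiable one_ne_zero p).hasFDerivAt)
    (fun p _ => ((hφy.differentiable one_ne_zero p).hasFDerivAt).mul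
      (hψ.differentiable one_ne_zero p).hasFDerivAt)
  have hdivergence : ∀ p : ℝ × ℝ,
      (pdx φ p • fderiv ℝ ψ p + ψ p • fderiv ℝ (pdx φ) p) (1, 0) +
        (pdy φ p • fderiv ℝ ψ p + ψ p • fderiv ℝ (pdy φ) p) (0, 1) =
      lap φ p * ψ p + gradDot φ ψ p := fun p => by
    simp only [add_apply, smul_apply, smul_eq_mul, lap, gradDot, pdx, pdy]
    ring
  simp only [hdivergence] at hdiv
  have hedge : ∀ h : ℝ → ℝ, ∫ s in (0:ℝ)..1, h s = ∫ s in Ioo (0:ℝ) 1, h s := fun h => by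
    rw [intervalIntegral.integral_of_le zero_le_one, integral_Ioc_eq_integral_Ioo]
  have hsplit : ∫ p in unitSq, lap φ p * ψ p + gradDot φ ψ p =
      (∫ p in unitSq, lap φ p * ψ p) + ∫ p in unitSq, gradDot φ ψ p :=
    integral_add (integrableOn_unitSq ((hφ.lap (m := 0) le_rfl).continuous.mul hψ.continuous))
      (integrableOn_unitSq ((hφ.of_le (by norm_num)).continuous_gradDot hψ))
  rw [← hsplit, setIntegral_congr_set unitSq_ae_eq_Icc,
    hdiv (hcont.continuousOn.integrableOn_compact isCompact_Icc), bInt_nder_mul]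
  simp only [hedge]
  ring

theorem integral_lap_mul_of_zeroNormalDeriv {φ ψ : ℝ × ℝ → ℝ} (hφ : ContDiff ℝ 2 φ)
    (hψ : ContDiff ℝ 1 ψ) (hbc : ZeroNormalDeriv φ) :
    ∫ p in unitSq, lap φ p * ψ p = -∫ p in unitSq, gradDot φ ψ p := by
  have := integral_lap_mul_add_integral_gradDot hφ hψ
  rw [bInt_nder_mul_eq_zero hbc] at this
  linarith

theorem a1_of_zeroNormalDeriv {φ ψ : ℝ × ℝ → ℝ} (γ : ℝ) (hφ : ContDiff ℝ 3 φ)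
    (hψ : ContDiff ℝ 2 ψ) (hbc : ZeroNormalDeriv φ) :
    a1 γ φ ψ = -∫ p in unitSq, gradDot (lap φ) ψ p := by
  have hgreen := integral_lap_mul_add_integral_gradDot hψ (hφ.lap (m := 1) le_rfl)
  simp only [mul_comm (lap ψ _), mul_comm (nder ψ _), gradDot_comm ψ] at hgreen
  rw [a1, bInt_nder_mul_eq_zero hbc, bInt_nder_mul_eq_zero hbc]
  linarith

theorem nitsche_variational_identity_general (ε T γ : ℝ)
    (u : ℝ → ℝ × ℝ → ℝ) (hu : ContDiff ℝ (⊤ : ℕ∞) (Function.uncurry u))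
    (w : ℝ → ℝ × ℝ → ℝ)
    (hw : ∀ t p, w t p = -ε^2 * lap (u t) p + fDW (u t p))
    (heq : ∀ t ∈ Icc (0:ℝ) T, ∀ p ∈ closure unitSq, dtu u t p = lap (w t) p)
    (hbcu : ∀ t ∈ Icc (0:ℝ) T, ZeroNormalDeriv (u t))
    (hbcw : ∀ t ∈ Icc (0:ℝ) T, ZeroNormalDeriv (w t)) :
    ∀ t ∈ Icc (0:ℝ) T, ∀ v : ℝ × ℝ → ℝ, ContDiff ℝ (⊤ : ℕ∞) v →
      (∫ p in unitSq, dtu u t p * v p) + ε^2 * a1 γ (u t) v +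
        (∫ p in unitSq,
          (pdx (fun q => fDW (u t q)) p * pdx v p +
           pdy (fun q => fDW (u t q)) p * pdy v p)) = 0 := by
  intro t ht v hv
  have hut : ContDiff ℝ 4 (u t) :=
    (hu.comp (contDiff_const.prodMk contDiff_id)).of_le ENat.LEInfty.out
  replace hv : ContDiff ℝ 2 v := hv.of_le ENat.LEInfty.out
  have hlap : ContDiff ℝ 2 (lap (u t)) := hut.lap (by norm_num)
  have hfu : ContDiff ℝ 2 fun q => fDW (u t q) :=
    ((contDiff_id.pow 3).sub contDiff_id).comp (hut.of_le (by norm_num))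
  have hwt : w t = fun p => -ε^2 * lap (u t) p + fDW (u t p) := funext (hw t)
  have hdtu : ∫ p in unitSq, dtu u t p * v p = ∫ p in unitSq, lap (w t) p * v p :=
    setIntegral_congr_fun (measurableSet_Ioo.prod measurableSet_Ioo) fun p hp => by
      rw [heq t ht p (subset_closure hp)]
  rw [hdtu, integral_lap_mul_of_zeroNormalDeriv (hwt ▸ (contDiff_const.mul hlap).add hfu)
      (hv.of_le one_le_two) (hbcw t ht), hwt,
    integral_gradDot_const_mul_add _ (hlap.of_le one_le_two) (hfu.of_le one_le_two)
      (hv.of_le one_le_two),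
    a1_of_zeroNormalDeriv γ (hut.of_le (by norm_num)) hv (hbcu t ht)]
  change _ + _ * _ + ∫ p in unitSq, gradDot (fun q => fDW (u t q)) v p = 0
  ring

/-- **The Nitsche variational identity.** If `u` is smooth, `w = -ε²Δu + f(u)`,
`∂ₜu = Δw` on `[0,T] × closure Ω`, and `∂ₙu = ∂ₙw = 0` on the four open edges of `∂Ω`,
then for every `t ∈ [0,T]` and every smooth `v`,
`∫_Ω ∂ₜu v + ε² a₁(u(t,·), v) + ∫_Ω ∇f(u(t,·))·∇v = 0`. -/
theorem nitsche_variational_identity (ε T γ : ℝ) (hε : 0 < ε) (hT : 0 < T)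
    (u : ℝ → ℝ × ℝ → ℝ) (hu : ContDiff ℝ (⊤ : ℕ∞) (Function.uncurry u))
    (w : ℝ → ℝ × ℝ → ℝ)
    (hw : ∀ t p, w t p = -ε^2 * lap (u t) p + fDW (u t p))
    (heq : ∀ t ∈ Icc (0:ℝ) T, ∀ p ∈ closure unitSq, dtu u t p = lap (w t) p)
    (hbcu : ∀ t ∈ Icc (0:ℝ) T, ZeroNormalDeriv (u t))
    (hbcw : ∀ t ∈ Icc (0:ℝ) T, ZeroNormalDeriv (w t)) :
    ∀ t ∈ Icc (0:ℝ) T, ∀ v : ℝ × ℝ → ℝ, ContDiff ℝ (⊤ : ℕ∞) v →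
      (∫ p in unitSq, dtu u t p * v p) + ε^2 * a1 γ (u t) v +
        (∫ p in unitSq,
          (pdx (fun q => fDW (u t q)) p * pdx v p +
           pdy (fun q => fDW (u t q)) p * pdy v p)) = 0 :=
  nitsche_variational_identity_general ε T γ u hu w hw heq hbcu hbcw
end

section
/- Fix h > 0, z ∈ ℝ², and data u₀, …, u₆ ∈ ℝ, and let p ∈ ℙ₂ be any minimizer of the least-squares functional Σ_{j=0}^{6} (p(z_j) − u_j)² over ℙ₂. Then the discrete Laplacian obtained by Hessian recovery reproduces the classical five-point finite-difference stencil: ∂²p/∂x²(z) + ∂²p/∂y²(z) = (u₁ + u₃ − 4u₀ + u₄ + u₆) / h². -/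
open Finset

/-- `p : ℝ² → ℝ` is a polynomial function of total degree at most 2, i.e. a member of
the six-dimensional space `ℙ₂`. -/
def IsP2 (p : ℝ × ℝ → ℝ) : Prop :=
  ∃ a b c d e f : ℝ, ∀ q : ℝ × ℝ,
    p q = a + b * q.1 + c * q.2 + d * q.1 ^ 2 + e * q.1 * q.2 + f * q.2 ^ 2

/-- The seven sampling points `z₀, …, z₆` of the first-layer patch of a vertex `z` of a
regular-pattern uniform triangular mesh with mesh size `h`. -/
def pts (h : ℝ) (z : ℝ × ℝ) : Fin 7 → ℝ × ℝ :=
  ![z, z + (h, 0), z + (h, h), z + (0, h), z - (h, 0), z - (h, h), z - (0, h)]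

/-- The least-squares functional `Σ_{j=0}^{6} (p(z_j) − u_j)²`. -/
noncomputable def LS (h : ℝ) (z : ℝ × ℝ) (u : Fin 7 → ℝ) (p : ℝ × ℝ → ℝ) : ℝ :=
  ∑ j : Fin 7, (p (pts h z j) - u j) ^ 2

/-!
The stencil weights `(-4, 1, 0, 1, 1, 0, 1)` at the seven nodes are the values of the quadratic
`-4 + 5x² - 6xy + 5y²` in the scaled coordinates `x = (w₁ - z₁)/h`, `y = (w₂ - z₂)/h`.
Testing the normal equations of the least-squares problem against this quadratic shows that the
fitted `p` and the data have the same five-point stencil; and the five-point stencil is exact on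
quadratics, where it equals `h² Δp`.
-/

theorem sum_mul_eq_zero_of_forall_sum_sq_le {ι : Type*} (s : Finset ι) (r v : ι → ℝ)
    (hmin : ∀ t : ℝ, ∑ i ∈ s, r i ^ 2 ≤ ∑ i ∈ s, (r i + t * v i) ^ 2) :
    ∑ i ∈ s, r i * v i = 0 := by
  have hexpand : ∀ t : ℝ, ∑ i ∈ s, (r i + t * v i) ^ 2
      = ∑ i ∈ s, r i ^ 2 + ((∑ i ∈ s, v i ^ 2) * (t * t) + 2 * (∑ i ∈ s, r i * v i) * t) := by
    intro t
    simp only [mul_sum, sum_mul, ← sum_add_distrib]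
    exact sum_congr rfl fun i _ => by ring
  have hdisc := discrim_le_zero (a := ∑ i ∈ s, v i ^ 2) (b := 2 * ∑ i ∈ s, r i * v i) (c := 0)
    fun t => by linarith [hmin t, hexpand t]
  rw [discrim] at hdisc
  nlinarith [sq_nonneg (∑ i ∈ s, r i * v i)]

def quadPoly (a b c d e f : ℝ) (w : ℝ × ℝ) : ℝ :=
  a + b * w.1 + c * w.2 + d * w.1 ^ 2 + e * w.1 * w.2 + f * w.2 ^ 2

theorem isP2_iff_exists_eq_quadPoly {p : ℝ × ℝ → ℝ} :
    IsP2 p ↔ ∃ a b c d e f : ℝ, p = quadPoly a b c d e f := by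
  simp only [IsP2, funext_iff, quadPoly]

theorem IsP2.add_const_mul {p q : ℝ × ℝ → ℝ} (hp : IsP2 p) (hq : IsP2 q) (t : ℝ) :
    IsP2 (fun w => p w + t * q w) := by
  obtain ⟨a, b, c, d, e, f, hp⟩ := hp
  obtain ⟨a', b', c', d', e', f', hq⟩ := hq
  exact ⟨a + t * a', b + t * b', c + t * c', d + t * d', e + t * e', f + t * f',
    fun w => by simp only [hp, hq]; ring⟩

theorem hasFDerivAt_quadPoly (a b c d e f : ℝ) (q : ℝ × ℝ) :
    HasFDerivAt (quadPoly a b c d e f)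
      ((b + 2 * d * q.1 + e * q.2) • ContinuousLinearMap.fst ℝ ℝ ℝ
        + (c + e * q.1 + 2 * f * q.2) • ContinuousLinearMap.snd ℝ ℝ ℝ) q := by
  have hx : HasFDerivAt (fun w : ℝ × ℝ => w.1) (ContinuousLinearMap.fst ℝ ℝ ℝ) q := hasFDerivAt_fst
  have hy : HasFDerivAt (fun w : ℝ × ℝ => w.2) (ContinuousLinearMap.snd ℝ ℝ ℝ) q := hasFDerivAt_snd
  have H := (((((hasFDerivAt_const a q).add (hx.const_mul b)).add (hy.const_mul c)).add
      ((hx.mul hx).const_mul d)).add ((hx.const_mul e).mul hy)).add ((hy.mul hy).const_mul f)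
  refine (H.congr_fderiv ?_).congr_of_eventuallyEq (Filter.Eventually.of_forall fun w => ?_)
  · ext <;> simp only [ContinuousLinearMap.add_comp, ContinuousLinearMap.smul_comp,
      ContinuousLinearMap.fst_comp_inl, ContinuousLinearMap.snd_comp_inl,
      ContinuousLinearMap.fst_comp_inr, ContinuousLinearMap.snd_comp_inr, add_apply, smul_apply,
      ContinuousLinearMap.id_apply, ContinuousLinearMap.zero_comp, zero_apply, smul_eq_mul] <;> ring
  · simp only [quadPoly, Pi.add_apply, Pi.mul_apply]; ring

theorem pdx_quadPoly (a b c d e f : ℝ) :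
    pdx (quadPoly a b c d e f) = quadPoly b (2 * d) e 0 0 0 := by
  funext q
  rw [pdx, (hasFDerivAt_quadPoly a b c d e f q).fderiv]
  simp [quadPoly]

theorem pdy_quadPoly (a b c d e f : ℝ) :
    pdy (quadPoly a b c d e f) = quadPoly c e (2 * f) 0 0 0 := by
  funext q
  rw [pdy, (hasFDerivAt_quadPoly a b c d e f q).fderiv]
  simp [quadPoly]

theorem laplacian_quadPoly (a b c d e f : ℝ) (z : ℝ × ℝ) :
    pdx (pdx (quadPoly a b c d e f)) z + pdy (pdy (quadPoly a b c d e f)) z = 2 * d + 2 * f := by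
  simp [pdx_quadPoly, pdy_quadPoly, quadPoly]

theorem fivePoint_quadPoly (a b c d e f h : ℝ) (z : ℝ × ℝ) :
    quadPoly a b c d e f (z + (h, 0)) + quadPoly a b c d e f (z + (0, h))
      + quadPoly a b c d e f (z - (h, 0)) + quadPoly a b c d e f (z - (0, h))
      - 4 * quadPoly a b c d e f z = h ^ 2 * (2 * d + 2 * f) := by
  simp only [quadPoly, Prod.fst_add, Prod.snd_add, Prod.fst_sub, Prod.snd_sub]
  ring

theorem LS_add_const_mul (h : ℝ) (z : ℝ × ℝ) (u : Fin 7 → ℝ) (p q : ℝ × ℝ → ℝ) (t : ℝ) :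
    LS h z u (fun w => p w + t * q w)
      = ∑ j, (p (pts h z j) - u j + t * q (pts h z j)) ^ 2 := by
  simp only [LS]
  exact sum_congr rfl fun j _ => by ring

theorem LS_normal_eq {h : ℝ} {z : ℝ × ℝ} {u : Fin 7 → ℝ} {p q : ℝ × ℝ → ℝ} (hp : IsP2 p)
    (hmin : ∀ q : ℝ × ℝ → ℝ, IsP2 q → LS h z u p ≤ LS h z u q) (hq : IsP2 q) :
    ∑ j, (p (pts h z j) - u j) * q (pts h z j) = 0 :=
  sum_mul_eq_zero_of_forall_sum_sq_le _ _ _ fun t => by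
    have hle := hmin _ (hp.add_const_mul hq t)
    rwa [LS_add_const_mul] at hle

noncomputable def fivePointWeight (h : ℝ) (z : ℝ × ℝ) (w : ℝ × ℝ) : ℝ :=
  -4 + 5 * ((w.1 - z.1) / h) ^ 2 - 6 * ((w.1 - z.1) / h) * ((w.2 - z.2) / h)
    + 5 * ((w.2 - z.2) / h) ^ 2

theorem isP2_fivePointWeight {h : ℝ} (hh : h ≠ 0) (z : ℝ × ℝ) : IsP2 (fivePointWeight h z) :=
  ⟨-4 + (5 * z.1 ^ 2 - 6 * z.1 * z.2 + 5 * z.2 ^ 2) / h ^ 2, (-10 * z.1 + 6 * z.2) / h ^ 2,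
    (6 * z.1 - 10 * z.2) / h ^ 2, 5 / h ^ 2, -6 / h ^ 2, 5 / h ^ 2,
    fun w => by simp only [fivePointWeight]; field_simp; ring⟩

theorem fivePointWeight_comp_pts {h : ℝ} (hh : h ≠ 0) (z : ℝ × ℝ) :
    fivePointWeight h z ∘ pts h z = ![-4, 1, 0, 1, 1, 0, 1] := by
  ext j
  fin_cases j <;> simp [fivePointWeight, pts, hh] <;> norm_num

theorem sum_mul_fivePointWeight {h : ℝ} (hh : h ≠ 0) (z : ℝ × ℝ) (v : Fin 7 → ℝ) :
    ∑ j, v j * fivePointWeight h z (pts h z j) = v 1 + v 3 + v 4 + v 6 - 4 * v 0 := by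
  rw [Fin.sum_univ_seven]
  simp only [← Function.comp_apply (f := fivePointWeight h z), fivePointWeight_comp_pts hh,
    Matrix.cons_val_zero, Matrix.cons_val_one, Matrix.cons_val]
  ring

/-- **The recovered discrete Laplacian is the five-point stencil.** For any
least-squares fitted quadratic `p` on the seven-point patch, the trace of the recovered
Hessian at `z` equals `(u₁ + u₃ − 4u₀ + u₄ + u₆)/h²`. -/
theorem recovered_laplacian_five_point (h : ℝ) (hh : 0 < h) (z : ℝ × ℝ) (u : Fin 7 → ℝ)
    (p : ℝ × ℝ → ℝ) (hp : IsP2 p)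
    (hmin : ∀ q : ℝ × ℝ → ℝ, IsP2 q → LS h z u p ≤ LS h z u q) :
    pdx (pdx p) z + pdy (pdy p) z = (u 1 + u 3 - 4 * u 0 + u 4 + u 6) / h ^ 2 := by
  have hnormal := LS_normal_eq hp hmin (isP2_fivePointWeight hh.ne' z)
  rw [sum_mul_fivePointWeight hh.ne'] at hnormal
  obtain ⟨a, b, c, d, e, f, rfl⟩ := isP2_iff_exists_eq_quadPoly.mp hp
  have hstencil := fivePoint_quadPoly a b c d e f h z
  simp only [pts, Matrix.cons_val] at hnormal
  rw [laplacian_quadPoly, eq_div_iff (by positivity)]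
  linarith
end
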